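/- Let A|B be a depth two ring extension with centralizer R, balanced as a right B-module. If the R-coring S = End_{B-B}(A) (with coproduct Δ(α)(a ⊗ a') = α(aa') and counit ε(α) = α(1)) is coseparable with cointegral γ, then e = Σ_i t_i γ(β_i ⊗ id_A) is a separability element for A|B; hence A is a separable extension of B. -/

import Mathlib

open TensorProduct

noncomputable section

namespace D2

variable (A : Type*) [Ring A] (B : Subring A)

/-- The defining relations of `A ⊗_B A` as a quotient of `A ⊗_ℤ A`. -/
def relSub : Submodule ℤ (A ⊗[ℤ] A) :=
  Submodule.span ℤ {x | ∃ (a c : A) (b : B), x = (a * (b : A)) ⊗ₜ[ℤ] c - a ⊗ₜ[ℤ] ((b : A) * c)}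

/-- The tensor square `A ⊗_B A` of a ring extension `B ⊆ A`. -/
abbrev TensorSq := (A ⊗[ℤ] A) ⧸ relSub A B

/-- The class of a simple tensor `a ⊗_B c`. -/
def tmulB (a c : A) : TensorSq A B := Submodule.Quotient.mk (a ⊗ₜ[ℤ] c)

/-- Left multiplication `a₀ • (x ⊗ y) = (a₀ x) ⊗ y` on `A ⊗_B A`. -/
def lmul (a : A) : TensorSq A B →ₗ[ℤ] TensorSq A B :=
  Submodule.mapQ _ _ (TensorProduct.map (LinearMap.mulLeft ℤ a) LinearMap.id) (by
    rw [relSub, Submodule.span_le]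
    rintro x ⟨a', c, b, rfl⟩
    simp only [SetLike.mem_coe, Submodule.mem_comap, map_sub, TensorProduct.map_tmul,
      LinearMap.mulLeft_apply, LinearMap.id_apply]
    refine Submodule.subset_span ⟨a * a', c, b, by
      erw [map_sub, TensorProduct.map_tmul, TensorProduct.map_tmul]
      simp only [LinearMap.mulLeft_apply, LinearMap.id_apply, mul_assoc]⟩)

/-- Right multiplication `(x ⊗ y) • a₀ = x ⊗ (y a₀)` on `A ⊗_B A`. -/
def rmul (a : A) : TensorSq A B →ₗ[ℤ] TensorSq A B :=
  Submodule.mapQ _ _ (TensorProduct.map LinearMap.id (LinearMap.mulRight ℤ a)) (by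
    rw [relSub, Submodule.span_le]
    rintro x ⟨a', c, b, rfl⟩
    simp only [SetLike.mem_coe, Submodule.mem_comap, map_sub, TensorProduct.map_tmul,
      LinearMap.mulRight_apply, LinearMap.id_apply]
    refine Submodule.subset_span ⟨a', c * a, b, by
      erw [map_sub, TensorProduct.map_tmul, TensorProduct.map_tmul]
      simp only [LinearMap.mulRight_apply, LinearMap.id_apply, mul_assoc]⟩)

/-- The multiplication map `A ⊗_B A → A`, `x ⊗ y ↦ x y`. -/
def mulQ : TensorSq A B →ₗ[ℤ] A :=
  Submodule.liftQ _ (LinearMap.mul' ℤ A) (by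
    rw [relSub, Submodule.span_le]
    rintro x ⟨a, c, b, rfl⟩
    erw [LinearMap.mem_ker, map_sub]
    erw [LinearMap.mul'_apply, LinearMap.mul'_apply, mul_assoc, sub_self])

/-- An element `t` of `A ⊗_B A` is `B`-central when `b t = t b` for all `b ∈ B`. -/
def IsBCentral (t : TensorSq A B) : Prop := ∀ b ∈ B, lmul A B b t = rmul A B b t

/-- An element `t` of `A ⊗_B A` is `A`-central (a Casimir element) when `a t = t a`. -/
def IsACentral (t : TensorSq A B) : Prop := ∀ a : A, lmul A B a t = rmul A B a t

/-- A `B`-`B`-bimodule endomorphism of `A`. -/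
def IsBB (α : A →ₗ[ℤ] A) : Prop :=
  ∀ b ∈ B, ∀ a : A, α ((b : A) * a) = b * α a ∧ α (a * b) = α a * b

/-- A right `B`-module endomorphism of `A`. -/
def IsRightB (f : A →ₗ[ℤ] A) : Prop := ∀ a : A, ∀ b ∈ B, f (a * b) = f a * b

/-- `x ↦ (x·) ⊗ id` as a linear map, used to build Sweedler-type expressions. -/
def lmulTen : A →ₗ[ℤ] (A ⊗[ℤ] A) →ₗ[ℤ] (A ⊗[ℤ] A) where
  toFun a := TensorProduct.map (LinearMap.mulLeft ℤ a) LinearMap.id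
  map_add' a a' := by
    apply TensorProduct.ext'
    intro x y
    erw [LinearMap.add_apply]
    simp [add_mul, TensorProduct.add_tmul]
  map_smul' z a := by
    apply TensorProduct.ext'
    intro x y
    erw [LinearMap.smul_apply]
    simp only [TensorProduct.map_tmul, LinearMap.mulLeft_apply, LinearMap.id_apply,
      LinearMap.smul_apply, RingHom.id_apply, smul_mul_assoc, TensorProduct.smul_tmul']

/-- For `ζ = Σ u ⊗ v`, the map `a ↦ Σ α(a u) v`, i.e. `α(? ζ¹) ζ²`. -/
def sweed (α : A →ₗ[ℤ] A) (ζ : A ⊗[ℤ] A) : A →ₗ[ℤ] A :=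
  ((LinearMap.mul' ℤ A).comp (TensorProduct.map α LinearMap.id)).comp ((lmulTen A).flip ζ)

/-- For `ζ = Σ u ⊗ v`, the element `Σ u r v` ("sandwich" evaluation `ζ¹ r ζ²`). -/
def sandw (r : A) (ζ : A ⊗[ℤ] A) : A :=
  (LinearMap.mul' ℤ A) ((TensorProduct.map (LinearMap.mulRight ℤ r) LinearMap.id) ζ)

/-- `mul₂ ζ ξ = Σ (u x) ⊗ (y v)` for `ζ = Σ u ⊗ v`, `ξ = Σ x ⊗ y`:
the product `ξ ·_T ζ` of two elements of `T = (A ⊗_B A)^B` on representatives. -/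
def mul₂ : (A ⊗[ℤ] A) →ₗ[ℤ] (A ⊗[ℤ] A) →ₗ[ℤ] (A ⊗[ℤ] A) :=
  TensorProduct.lift <| LinearMap.mk₂ ℤ
    (fun u v => TensorProduct.map (LinearMap.mulLeft ℤ u) (LinearMap.mulRight ℤ v))
    (fun u u' v => by
      apply TensorProduct.ext'
      intro x y
      erw [LinearMap.add_apply]
      simp [add_mul, TensorProduct.add_tmul])
    (fun z u v => by
      apply TensorProduct.ext'
      intro x y
      change _ = z • (TensorProduct.map _ _ (x ⊗ₜ[ℤ] y))
      simp only [TensorProduct.map_tmul, LinearMap.mulLeft_apply, LinearMap.mulRight_apply,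
        LinearMap.smul_apply, smul_mul_assoc, TensorProduct.smul_tmul'])
    (fun u v v' => by
      apply TensorProduct.ext'
      intro x y
      erw [LinearMap.add_apply]
      simp [mul_add, TensorProduct.tmul_add])
    (fun z u v => by
      apply TensorProduct.ext'
      intro x y
      change _ = z • (TensorProduct.map _ _ (x ⊗ₜ[ℤ] y))
      simp only [TensorProduct.map_tmul, LinearMap.mulLeft_apply, LinearMap.mulRight_apply,
        LinearMap.smul_apply, mul_smul_comm, TensorProduct.tmul_smul])

/-- `A` is balanced as a right `B`-module. -/
def RightBalanced : Prop :=
  ∀ φ : A →+ A,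
    (∀ f : A →+ A, (∀ a : A, ∀ b ∈ B, f (a * b) = f a * b) → ∀ a, φ (f a) = f (φ a)) →
    ∃ b ∈ B, ∀ a, φ a = a * b

end D2

end



noncomputable section Aux

open TensorProduct

namespace D2Aux

variable {A : Type*} [Ring A] (B : Subring A)

lemma lmul_mk (a : A) (z : A ⊗[ℤ] A) :
    D2.lmul A B a (Submodule.Quotient.mk z) =
      Submodule.Quotient.mk (D2.lmulTen A a z) := by
  rfl

lemma lmulTen_tmul (a u v : A) : D2.lmulTen A a (u ⊗ₜ[ℤ] v) = (a * u) ⊗ₜ[ℤ] v := rfl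

lemma rmul_mk (x : A) (z : A ⊗[ℤ] A) :
    D2.rmul A B x (Submodule.Quotient.mk z) =
      Submodule.Quotient.mk
        (TensorProduct.map LinearMap.id (LinearMap.mulRight ℤ x) z) := by
  rfl

lemma mulQ_mk (z : A ⊗[ℤ] A) :
    D2.mulQ A B (Submodule.Quotient.mk z) = LinearMap.mul' ℤ A z := by
  rfl

lemma rmul_zero' (s : D2.TensorSq A B) : D2.rmul A B 0 s = 0 := by
  obtain ⟨z, rfl⟩ := Submodule.Quotient.mk_surjective _ s
  rw [rmul_mk]
  have : TensorProduct.map (LinearMap.id (M := A)) (LinearMap.mulRight ℤ (0 : A)) z = 0 := by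
    induction z using TensorProduct.induction_on with
    | zero => simp
    | tmul u v => simp
    | add p q hp hq => simp [hp, hq]
  simp [this]

lemma rmul_add' (x y : A) (s : D2.TensorSq A B) :
    D2.rmul A B (x + y) s = D2.rmul A B x s + D2.rmul A B y s := by
  obtain ⟨z, rfl⟩ := Submodule.Quotient.mk_surjective _ s
  rw [rmul_mk, rmul_mk, rmul_mk, ← Submodule.Quotient.mk_add]
  congr 1
  induction z using TensorProduct.induction_on with
  | zero => simp
  | tmul u v => simp [mul_add, TensorProduct.tmul_add]
  | add p q hp hq => simp only [map_add, hp, hq]; abel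

/-- `rmul` as an additive hom in its scalar argument. -/
def rmulHom (s : D2.TensorSq A B) : A →+ D2.TensorSq A B :=
  AddMonoidHom.mk' (fun x => D2.rmul A B x s) (fun x y => rmul_add' B x y s)

lemma rmul_mul' (x y : A) (s : D2.TensorSq A B) :
    D2.rmul A B (x * y) s = D2.rmul A B y (D2.rmul A B x s) := by
  obtain ⟨z, rfl⟩ := Submodule.Quotient.mk_surjective _ s
  rw [rmul_mk, rmul_mk, rmul_mk]
  congr 1
  induction z using TensorProduct.induction_on with
  | zero => simp
  | tmul u v => simp [mul_assoc]
  | add p q hp hq => simp only [map_add, hp, hq]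

lemma lmul_rmul (a x : A) (s : D2.TensorSq A B) :
    D2.lmul A B a (D2.rmul A B x s) = D2.rmul A B x (D2.lmul A B a s) := by
  obtain ⟨z, rfl⟩ := Submodule.Quotient.mk_surjective _ s
  rw [rmul_mk, lmul_mk, lmul_mk, rmul_mk]
  congr 1
  induction z using TensorProduct.induction_on with
  | zero => simp
  | tmul u v => simp [lmulTen_tmul]
  | add p q hp hq => simp only [map_add, hp, hq]

lemma mulQ_rmul (x : A) (s : D2.TensorSq A B) :
    D2.mulQ A B (D2.rmul A B x s) = D2.mulQ A B s * x := by
  obtain ⟨z, rfl⟩ := Submodule.Quotient.mk_surjective _ s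
  rw [rmul_mk, mulQ_mk, mulQ_mk]
  induction z using TensorProduct.induction_on with
  | zero => simp
  | tmul u v => simp [mul_assoc]
  | add p q hp hq => simp only [map_add, hp, hq, add_mul]

lemma mulQ_lmul (a : A) (s : D2.TensorSq A B) :
    D2.mulQ A B (D2.lmul A B a s) = a * D2.mulQ A B s := by
  obtain ⟨z, rfl⟩ := Submodule.Quotient.mk_surjective _ s
  rw [lmul_mk, mulQ_mk, mulQ_mk]
  induction z using TensorProduct.induction_on with
  | zero => simp
  | tmul u v => simp [lmulTen_tmul, mul_assoc]
  | add p q hp hq => simp only [map_add, hp, hq, mul_add]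

lemma sweed_tmul (α : A →ₗ[ℤ] A) (u v a : A) :
    D2.sweed A α (u ⊗ₜ[ℤ] v) a = α (a * u) * v := by
  rfl

lemma sweed_zero (α : A →ₗ[ℤ] A) : D2.sweed A α (0 : A ⊗[ℤ] A) = 0 := by
  ext a
  show LinearMap.mul' ℤ A (TensorProduct.map α LinearMap.id (D2.lmulTen A a 0)) = 0
  rw [map_zero, map_zero, map_zero]

lemma sweed_add (α : A →ₗ[ℤ] A) (z z' : A ⊗[ℤ] A) :
    D2.sweed A α (z + z') = D2.sweed A α z + D2.sweed A α z' := by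
  ext a
  show LinearMap.mul' ℤ A (TensorProduct.map α LinearMap.id (D2.lmulTen A a (z+z'))) =
    LinearMap.mul' ℤ A (TensorProduct.map α LinearMap.id (D2.lmulTen A a z)) +
    LinearMap.mul' ℤ A (TensorProduct.map α LinearMap.id (D2.lmulTen A a z'))
  rw [map_add, map_add, map_add]

lemma sweed_id (z : A ⊗[ℤ] A) (a : A) :
    D2.sweed A LinearMap.id z a = a * LinearMap.mul' ℤ A z := by
  induction z using TensorProduct.induction_on with
  | zero => simp [sweed_zero]
  | tmul u v => simp [sweed_tmul, mul_assoc]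
  | add p q hp hq =>
      simp only [sweed_add, LinearMap.add_apply, map_add, mul_add, hp, hq]

end D2Aux

end Aux

open TensorProduct in
/-- if the `R`-coring `S = End_{B-B}(A)` of a depth two extension (with `A_B`
f.g. projective and balanced) is coseparable with cointegral `γ`, then
`e = Σᵢ tᵢ γ(βᵢ ⊗ id)` is a separability element for `A|B`, so `A|B` is separable. -/
theorem stmt4 {A : Type*} [Ring A] (B : Subring A)
    -- left D2 quasibasis
    (m : ℕ) (t : Fin m → A ⊗[ℤ] A) (β : Fin m → (A →ₗ[ℤ] A))
    (hc : ∀ i, D2.IsBCentral A B (Submodule.Quotient.mk (t i)))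
    (hβ : ∀ i, D2.IsBB A B (β i))
    (hqb : ∀ a a' : A, D2.tmulB A B a a' =
      ∑ i, D2.rmul A B (β i a * a') (Submodule.Quotient.mk (t i)))
    -- A_B finitely generated projective: a dual basis
    (N : ℕ) (aB : Fin N → A) (fB : Fin N → (A →ₗ[ℤ] A))
    (hfB : ∀ j, D2.IsRightB A B (fB j)) (hfBval : ∀ j a, fB j a ∈ B)
    (hdb : ∀ a : A, a = ∑ j, aB j * fB j a)
    -- A_B balanced
    (hbal : D2.RightBalanced A B)
    -- a cointegral γ : S ⊗_R S → R for the coring S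
    (γ : (A →ₗ[ℤ] A) → (A →ₗ[ℤ] A) → A)
    (hadd₁ : ∀ α α' δ, γ (α + α') δ = γ α δ + γ α' δ)
    (hadd₂ : ∀ α δ δ', γ α (δ + δ') = γ α δ + γ α δ')
    (hval : ∀ α δ, D2.IsBB A B α → D2.IsBB A B δ → γ α δ ∈ Subring.centralizer (B : Set A))
    (hbalanced : ∀ α δ, D2.IsBB A B α → D2.IsBB A B δ →
      ∀ r ∈ Subring.centralizer (B : Set A),
        γ ((LinearMap.mulRight ℤ r).comp α) δ = γ α ((LinearMap.mulLeft ℤ r).comp δ))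
    (hbimod : ∀ α δ, D2.IsBB A B α → D2.IsBB A B δ →
      ∀ r ∈ Subring.centralizer (B : Set A), ∀ r' ∈ Subring.centralizer (B : Set A),
        γ ((LinearMap.mulLeft ℤ r).comp α) ((LinearMap.mulRight ℤ r').comp δ) = r * γ α δ * r')
    -- the two cointegral axioms, written out on the coproduct Δ(α) = Σᵢ α(? tᵢ¹)tᵢ² ⊗ βᵢ
    (hcoint₁ : ∀ α : A →ₗ[ℤ] A, D2.IsBB A B α →
      ∑ i, γ (D2.sweed A α (t i)) (β i) = α 1)
    (hcoint₂ : ∀ α α' : A →ₗ[ℤ] A, D2.IsBB A B α → D2.IsBB A B α' → ∀ a : A,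
      ∑ i, (D2.sweed A α (t i)) a * γ (β i) α' =
      ∑ i, γ α (D2.sweed A α' (t i)) * (β i) a) :
    D2.IsACentral A B
      (∑ i, D2.rmul A B (γ (β i) LinearMap.id) (Submodule.Quotient.mk (t i))) ∧
    D2.mulQ A B
      (∑ i, D2.rmul A B (γ (β i) LinearMap.id) (Submodule.Quotient.mk (t i))) = 1 := by
  classical
  have idBB : D2.IsBB A B LinearMap.id := fun b hb a => ⟨rfl, rfl⟩
  -- the elements rᵢ = tᵢ¹ tᵢ² lie in the centralizer R
  have hr : ∀ i, LinearMap.mul' ℤ A (t i) ∈ Subring.centralizer (B : Set A) := by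
    intro i
    rw [Subring.mem_centralizer_iff]
    intro b hb
    have h := congrArg (D2.mulQ A B) (hc i b hb)
    rwa [D2Aux.mulQ_lmul, D2Aux.mulQ_rmul, D2Aux.mulQ_mk] at h
  -- sweed id tᵢ = (· * rᵢ)
  have hsid : ∀ i, D2.sweed A LinearMap.id (t i) =
      (LinearMap.mulRight ℤ (LinearMap.mul' ℤ A (t i))).comp LinearMap.id := by
    intro i
    ext a
    simp [D2Aux.sweed_id]
  have honeL : ∀ f : A →ₗ[ℤ] A, (LinearMap.mulLeft ℤ (1 : A)).comp f = f := by
    intro f; ext a; simp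
  -- γ α (sweed id tᵢ) = γ α id * rᵢ
  have hγr : ∀ (α : A →ₗ[ℤ] A), D2.IsBB A B α → ∀ i,
      γ α (D2.sweed A LinearMap.id (t i)) = γ α LinearMap.id * LinearMap.mul' ℤ A (t i) := by
    intro α hα i
    rw [hsid i]
    have h := hbimod α LinearMap.id hα idBB 1 (one_mem _) (LinearMap.mul' ℤ A (t i)) (hr i)
    rw [honeL, one_mul] at h
    exact h
  -- Σ rᵢ βᵢ(a) = a
  have hsum_r : ∀ a : A, ∑ i, LinearMap.mul' ℤ A (t i) * β i a = a := by
    intro a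
    have h := congrArg (D2.mulQ A B) (hqb a 1)
    rw [map_sum] at h
    simp only [D2.tmulB, D2Aux.mulQ_mk, D2Aux.mulQ_rmul, mul_one,
      LinearMap.mul'_apply] at h
    exact h.symm
  -- additivity of γ in the second argument over sums
  have gsum : ∀ (α : A →ₗ[ℤ] A) (g : Fin m → (A →ₗ[ℤ] A)),
      γ α (∑ i, g i) = ∑ i, γ α (g i) := fun α g =>
    map_sum (AddMonoidHom.mk' (γ α) (hadd₂ α)) g Finset.univ
  have rmul_sum : ∀ (g : Fin m → A) (s : D2.TensorSq A B),
      D2.rmul A B (∑ i, g i) s = ∑ i, D2.rmul A B (g i) s := fun g s =>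
    map_sum (D2Aux.rmulHom B s) g Finset.univ
  -- the quasibasis equation on a general element of A ⊗ A
  have hQB : ∀ (z : A ⊗[ℤ] A) (a : A),
      (Submodule.Quotient.mk (D2.lmulTen A a z) : D2.TensorSq A B) =
        ∑ k, D2.rmul A B (D2.sweed A (β k) z a) (Submodule.Quotient.mk (t k)) := by
    intro z a
    induction z using TensorProduct.induction_on with
    | zero => simp [D2Aux.sweed_zero, D2Aux.rmul_zero']
    | tmul u v =>
        have h := hqb (a * u) v
        simp only [D2.tmulB] at h
        have hl : D2.lmulTen A a (u ⊗ₜ[ℤ] v) = (a * u) ⊗ₜ[ℤ] v := by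
          exact D2Aux.lmulTen_tmul a u v
        rw [hl, h]
        exact Finset.sum_congr rfl fun k _ => by rw [D2Aux.sweed_tmul]
    | add p q hp hq =>
        rw [map_add, Submodule.Quotient.mk_add, hp, hq, ← Finset.sum_add_distrib]
        exact Finset.sum_congr rfl fun k _ => by
          rw [D2Aux.sweed_add, LinearMap.add_apply, D2Aux.rmul_add']
  -- the key consequence of the cointegral's coassociativity axiom
  have hkey : ∀ (α : A →ₗ[ℤ] A), D2.IsBB A B α → ∀ a : A,
      ∑ i, D2.sweed A α (t i) a * γ (β i) LinearMap.id = γ α LinearMap.id * a := by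
    intro α hα a
    rw [hcoint₂ α LinearMap.id hα idBB a]
    calc ∑ i, γ α (D2.sweed A LinearMap.id (t i)) * β i a
        = ∑ i, γ α LinearMap.id * (LinearMap.mul' ℤ A (t i) * β i a) :=
          Finset.sum_congr rfl fun i _ => by rw [hγr α hα i, mul_assoc]
      _ = γ α LinearMap.id * a := by rw [← Finset.mul_sum, hsum_r a]
  -- γ(id, id) = 1
  have hone : γ LinearMap.id LinearMap.id = 1 := by
    have h := hcoint₁ LinearMap.id idBB
    simp only [LinearMap.id_apply] at h
    calc γ LinearMap.id LinearMap.id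
        = γ LinearMap.id
            (∑ i, (LinearMap.mulLeft ℤ (LinearMap.mul' ℤ A (t i))).comp (β i)) := by
          congr 1
          ext a
          simp only [LinearMap.sum_apply, LinearMap.comp_apply, LinearMap.mulLeft_apply,
            LinearMap.id_apply]
          exact (hsum_r a).symm
      _ = ∑ i, γ LinearMap.id
            ((LinearMap.mulLeft ℤ (LinearMap.mul' ℤ A (t i))).comp (β i)) := gsum _ _
      _ = ∑ i, γ (D2.sweed A LinearMap.id (t i)) (β i) :=
          Finset.sum_congr rfl fun i _ => by
            rw [hsid i]
            exact (hbalanced LinearMap.id (β i) idBB (hβ i) _ (hr i)).symm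
      _ = 1 := h
  constructor
  · -- A-centrality
    intro a
    rw [map_sum, map_sum]
    calc ∑ i, D2.lmul A B a
          (D2.rmul A B (γ (β i) LinearMap.id) (Submodule.Quotient.mk (t i)))
        = ∑ i, D2.rmul A B (γ (β i) LinearMap.id)
            (Submodule.Quotient.mk (D2.lmulTen A a (t i))) :=
          Finset.sum_congr rfl fun i _ => by rw [D2Aux.lmul_rmul, D2Aux.lmul_mk]
      _ = ∑ i, ∑ k, D2.rmul A B (γ (β i) LinearMap.id)
            (D2.rmul A B (D2.sweed A (β k) (t i) a) (Submodule.Quotient.mk (t k))) :=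
          Finset.sum_congr rfl fun i _ => by rw [hQB (t i) a, map_sum]
      _ = ∑ k, ∑ i, D2.rmul A B (D2.sweed A (β k) (t i) a * γ (β i) LinearMap.id)
            (Submodule.Quotient.mk (t k)) := by
          rw [Finset.sum_comm]
          exact Finset.sum_congr rfl fun k _ => Finset.sum_congr rfl fun i _ => by
            rw [← D2Aux.rmul_mul']
      _ = ∑ k, D2.rmul A B a
            (D2.rmul A B (γ (β k) LinearMap.id) (Submodule.Quotient.mk (t k))) :=
          Finset.sum_congr rfl fun k _ => by
            rw [← rmul_sum, hkey (β k) (hβ k) a, D2Aux.rmul_mul']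
  · -- multiplication gives 1
    rw [map_sum]
    simp only [D2Aux.mulQ_rmul, D2Aux.mulQ_mk]
    have h2 := hcoint₂ LinearMap.id LinearMap.id idBB idBB 1
    simp only [D2Aux.sweed_id, one_mul] at h2
    rw [h2]
    calc ∑ i, γ LinearMap.id (D2.sweed A LinearMap.id (t i)) * β i (1 : A)
        = ∑ i, γ LinearMap.id LinearMap.id * (LinearMap.mul' ℤ A (t i) * β i 1) :=
          Finset.sum_congr rfl fun i _ => by rw [hγr LinearMap.id idBB i, mul_assoc]
      _ = 1 := by rw [← Finset.mul_sum, hsum_r, hone, one_mul]
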